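/- arXiv:1308.1815 — 3 statements merged into one kernel-verified Lean document; each statement's English description precedes it below -/
import Mathlib

section
/- Let n ≥ 1, let F be a continuous cumulative distribution function on ℝ, and let d(Y;t) = Σ_{i=0}^n u_i·1{Y_i ≤ t < Y_{i+1}} be an invariant estimator with constants 0 ≤ u_0 ≤ u_1 ≤ … ≤ u_n ≤ 1. Then for every Borel measurable ρ: ℝ → [0,∞] and every continuous strictly increasing τ: [0,1] → ℝ, the risk satisfies E_F[∫_ℝ ρ(τ(d(Y;t)) − τ(F(t))) dF(t)] = Σ_{i=0}^n ∫₀¹ ρ(τ(u_i) − τ(t))·C(n,i)·t^i·(1−t)^{n−i} dt = (1/(n+1))·Σ_{i=0}^n ∫₀¹ ρ(τ(u_i) − τ(t))·f_{T_i}(t) dt (an identity in [0,∞]); in particular, the risk of an invariant estimator does not depend on F. -/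
/-! For fixed `t`, the number of sample points `≤ t` is binomial with parameters `n` and
`F t`, so after exchanging the two integrals the risk becomes
`∫ Σᵢ C(n,i) F(t)^i (1 - F(t))^(n-i) ρ(τ(uᵢ) - τ(F t)) dF(t)`, a function of `F t` alone.
As `F` is continuous, it pushes `μ` forward to the uniform distribution on `[0,1]`
(probability integral transform), which turns this into integrals over `(0,1)`. -/

open MeasureTheory Set
open scoped ENNReal NNReal

noncomputable section

/-- Number of sample points `x j ≤ t`, as an element of `Fin (n+1)`.
Note `countLE x t = i` iff `Y_i ≤ t < Y_{i+1}` where `Y_1 ≤ … ≤ Y_n` are the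
order statistics of `x` and `Y_0 = -∞`, `Y_{n+1} = +∞`. -/
def countLE {n : ℕ} (x : Fin n → ℝ) (t : ℝ) : Fin (n + 1) :=
  ⟨(Finset.univ.filter (fun j => x j ≤ t)).card,
    Nat.lt_succ_of_le ((Finset.card_filter_le _ _).trans (by simp))⟩

/-- The invariant estimator `d(Y;t) = Σ_{i=0}^n u_i · 1{Y_i ≤ t < Y_{i+1}}`. -/
def invEst {n : ℕ} (u : Fin (n + 1) → ℝ) : (Fin n → ℝ) → ℝ → ℝ :=
  fun x t => u (countLE x t)

/-- The cumulative distribution function of `μ`. -/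
def cdfOf (μ : Measure ℝ) (t : ℝ) : ℝ := (μ (Set.Iic t)).toReal

/-- Distribution of an i.i.d. sample of size `n` from `μ`. -/
def sampleMeasure (n : ℕ) (μ : Measure ℝ) : Measure (Fin n → ℝ) :=
  Measure.pi fun _ => μ

/-- `(n+1)·C(n,i)·t^i·(1−t)^{n−i}`, the `Beta(i+1, n−i+1)` density on `(0,1)`. -/
def betaDen (n i : ℕ) (t : ℝ) : ℝ :=
  ((n : ℝ) + 1) * (n.choose i) * t ^ i * (1 - t) ^ (n - i)


/-- The risk `E_F[∫ ρ(τ(d(Y;t)) − τ(F(t))) dF(t)]` with values in `[0,∞]`. -/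
def riskE {n : ℕ} (μ : Measure ℝ) (ρ : ℝ → ℝ≥0∞) (τ : ℝ → ℝ)
    (d : (Fin n → ℝ) → ℝ → ℝ) : ℝ≥0∞ :=
  ∫⁻ x, (∫⁻ t, ρ (τ (d x t) - τ (cdfOf μ t)) ∂μ) ∂(sampleMeasure n μ)

section BinomialCount

open Finset

variable {α ι : Type*} [Fintype ι] {A : Set α} [DecidablePred (· ∈ A)]

lemma setOf_filter_mem_eq_pi [DecidableEq ι] (s : Finset ι) :
    {x : ι → α | univ.filter (fun j => x j ∈ A) = s} =
      Set.univ.pi fun j => if j ∈ s then A else Aᶜ := by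
  ext x
  simp only [Set.mem_ofPred_eq, Set.mem_pi, Set.mem_univ, true_implies, Finset.ext_iff,
    mem_filter, Finset.mem_univ, true_and]
  refine forall_congr' fun j => ?_
  split_ifs with hj <;> simp [hj]

variable [MeasurableSpace α]

lemma Measure.pi_setOf_filter_mem_eq [DecidableEq ι] (μ : Measure α) [SigmaFinite μ]
    (s : Finset ι) :
    Measure.pi (fun _ : ι => μ) {x | univ.filter (fun j => x j ∈ A) = s} =
      μ A ^ #s * μ Aᶜ ^ (Fintype.card ι - #s) := by
  rw [setOf_filter_mem_eq_pi, Measure.pi_pi]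
  simp only [apply_ite μ]
  rw [prod_ite, prod_const, prod_const, filter_mem_eq_inter, Finset.univ_inter,
    filter_notMem_eq_sdiff, card_univ_sdiff]

theorem Measure.pi_setOf_card_filter_mem_eq (μ : Measure α) [SigmaFinite μ] (hA : MeasurableSet A)
    (k : ℕ) :
    Measure.pi (fun _ : ι => μ) {x | #(univ.filter fun j => x j ∈ A) = k} =
      (Fintype.card ι).choose k * μ A ^ k * μ Aᶜ ^ (Fintype.card ι - k) := by
  classical
  have hunion : {x : ι → α | #(univ.filter fun j => x j ∈ A) = k} =
      ⋃ s ∈ univ.powersetCard k, {x | univ.filter (fun j => x j ∈ A) = s} := by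
    ext x; simp
  have hdisj : Set.PairwiseDisjoint (powersetCard k (univ : Finset ι) : Set (Finset ι))
      fun s : Finset ι => {x : ι → α | univ.filter (fun j => x j ∈ A) = s} :=
    fun s _ s' _ hss' => Set.disjoint_left.mpr fun x hx hx' => hss' (hx.symm.trans hx')
  have hmeas (s : Finset ι) :
      MeasurableSet {x : ι → α | univ.filter (fun j => x j ∈ A) = s} := by
    rw [setOf_filter_mem_eq_pi]
    exact MeasurableSet.univ_pi fun j => by split_ifs <;> simp [hA, hA.compl]
  rw [hunion, measure_biUnion_finset hdisj (fun s _ => hmeas s),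
    sum_congr rfl fun s hs => by rw [Measure.pi_setOf_filter_mem_eq, (mem_powersetCard.mp hs).2],
    sum_const, card_powersetCard, card_univ, nsmul_eq_mul, mul_assoc]

end BinomialCount

open Filter Topology ProbabilityTheory

section ProbabilityIntegralTransform

lemma cdfOf_eq_cdf (μ : Measure ℝ) [IsProbabilityMeasure μ] : cdfOf μ = cdf μ := by
  ext t; rw [cdfOf, cdf_eq_real, measureReal_def]

variable {μ : Measure ℝ}

lemma exists_cdf_eq (hF : Continuous (cdf μ)) {a : ℝ} (ha : a ∈ Ioo 0 1) : ∃ c, cdf μ c = a :=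
  mem_range_of_exists_le_of_exists_ge hF
    ((tendsto_cdf_atBot μ).eventually (eventually_le_nhds ha.1)).exists
    ((tendsto_cdf_atTop μ).eventually (eventually_ge_nhds ha.2)).exists

variable [IsProbabilityMeasure μ]

-- The preimage is squeezed between sublevel sets `Iic c`, where `cdf μ c` takes every value
-- in `(0,1)` by the intermediate value theorem.
lemma measure_cdf_preimage_Iic (hF : Continuous (cdf μ)) {a : ℝ} (ha : a ∈ Ico 0 1) :
    μ (cdf μ ⁻¹' Iic a) = ENNReal.ofReal a := by
  refine le_antisymm ?_ ?_
  · refine ge_of_tendsto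
      ((ENNReal.continuous_ofReal.tendsto a).mono_left (nhdsWithin_le_nhds (s := Ioi a))) ?_
    filter_upwards [Ioo_mem_nhdsGT ha.2] with b hb
    obtain ⟨c, rfl⟩ := exists_cdf_eq hF ⟨ha.1.trans_lt hb.1, hb.2⟩
    rw [ofReal_cdf]
    exact measure_mono fun t ht => ((monotone_cdf μ).reflect_lt (lt_of_le_of_lt ht hb.1)).le
  · rcases ha.1.eq_or_lt with rfl | ha0
    · simp
    obtain ⟨c, rfl⟩ := exists_cdf_eq hF ⟨ha0, ha.2⟩
    rw [ofReal_cdf]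
    exact measure_mono fun t ht => monotone_cdf μ ht

theorem map_cdf_eq_volume_restrict (hF : Continuous (cdf μ)) :
    μ.map (cdf μ) = volume.restrict (Icc 0 1) := by
  refine Measure.ext_of_Iic _ _ fun a => ?_
  have hIcc : Iic a ∩ Icc 0 1 = Icc 0 (min a 1) := by
    ext; simp only [mem_inter_iff, mem_Iic, mem_Icc, le_min_iff]; tauto
  rw [Measure.map_apply hF.measurable measurableSet_Iic, Measure.restrict_apply measurableSet_Iic,
    hIcc, Real.volume_Icc, sub_zero]
  rcases lt_or_ge a 0 with ha0 | ha0
  · have hempty : cdf μ ⁻¹' Iic a = ∅ :=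
      eq_empty_of_forall_notMem fun t ht => (ha0.trans_le (cdf_nonneg μ t)).not_ge ht
    rw [hempty, measure_empty, ENNReal.ofReal_of_nonpos ((min_le_left a 1).trans ha0.le)]
  rcases lt_or_ge a 1 with ha1 | ha1
  · rw [min_eq_left ha1.le, measure_cdf_preimage_Iic hF ⟨ha0, ha1⟩]
  · have huniv : cdf μ ⁻¹' Iic a = univ :=
      eq_univ_of_forall fun t => (cdf_le_one μ t).trans ha1
    rw [huniv, measure_univ, min_eq_right ha1, ENNReal.ofReal_one]

lemma lintegral_comp_cdf (hF : Continuous (cdf μ)) {f : ℝ → ℝ≥0∞}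
    (hf : AEMeasurable f (volume.restrict (Ioo 0 1))) :
    ∫⁻ t, f (cdf μ t) ∂μ = ∫⁻ s in Ioo 0 1, f s := by
  rw [restrict_Ioo_eq_restrict_Icc, ← map_cdf_eq_volume_restrict hF] at hf ⊢
  exact (lintegral_map' hf hF.aemeasurable).symm

lemma choose_mul_measure_Iic_pow_mul_measure_Ioi_pow (t : ℝ) (n i : ℕ) :
    (n.choose i : ℝ≥0∞) * μ (Iic t) ^ i * μ (Ioi t) ^ (n - i) =
      ENNReal.ofReal (n.choose i * cdf μ t ^ i * (1 - cdf μ t) ^ (n - i)) := by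
  have hF0 := cdf_nonneg μ t
  rw [← compl_Iic, prob_compl_eq_one_sub measurableSet_Iic, ← ofReal_cdf, ← ENNReal.ofReal_one,
    ← ENNReal.ofReal_sub _ hF0, ENNReal.ofReal_mul (by positivity),
    ENNReal.ofReal_mul (by positivity), ENNReal.ofReal_pow hF0, ENNReal.ofReal_pow (sub_nonneg.mpr (cdf_le_one μ t)),
    ENNReal.ofReal_natCast]

end ProbabilityIntegralTransform

section InvariantEstimator

variable {n : ℕ}

lemma measurable_countLE : Measurable fun p : (Fin n → ℝ) × ℝ => countLE p.1 p.2 := by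
  have hcard : Measurable fun p : (Fin n → ℝ) × ℝ =>
      ∑ j, {p : (Fin n → ℝ) × ℝ | p.1 j ≤ p.2}.indicator (1 : (Fin n → ℝ) × ℝ → ℕ) p :=
    Finset.measurable_sum _ fun j _ => measurable_one.indicator
      (measurableSet_le ((measurable_pi_apply j).comp measurable_fst) measurable_snd)
  refine measurable_to_countable' fun i => ?_
  convert hcard (measurableSet_singleton (i : ℕ)) using 1
  ext p
  simp only [mem_preimage, mem_singleton_iff, Set.mem_ofPred_eq, countLE, Fin.ext_iff,
    Set.indicator_apply, Pi.one_apply, Finset.sum_boole, Nat.cast_id]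

instance (μ : Measure ℝ) [SigmaFinite μ] : SigmaFinite (sampleMeasure n μ) := by
  unfold sampleMeasure; infer_instance

lemma sampleMeasure_setOf_countLE_eq (μ : Measure ℝ) [SigmaFinite μ] (t : ℝ) (i : Fin (n + 1)) :
    sampleMeasure n μ {x | countLE x t = i} =
      n.choose i * μ (Iic t) ^ (i : ℕ) * μ (Ioi t) ^ (n - i) := by
  simpa [sampleMeasure, countLE, Fin.ext_iff] using
    Measure.pi_setOf_card_filter_mem_eq (ι := Fin n) μ (measurableSet_Iic (a := t)) i

lemma lintegral_sampleMeasure_comp_countLE (μ : Measure ℝ) [SigmaFinite μ] (t : ℝ)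
    (g : Fin (n + 1) → ℝ≥0∞) :
    ∫⁻ x, g (countLE x t) ∂(sampleMeasure n μ) =
      ∑ i : Fin (n + 1), n.choose i * μ (Iic t) ^ (i : ℕ) * μ (Ioi t) ^ (n - i) * g i := by
  have hm : Measurable fun x : Fin n → ℝ => countLE x t :=
    measurable_countLE.comp (measurable_id.prodMk measurable_const)
  rw [← lintegral_map measurable_from_top hm, lintegral_fintype]
  refine Finset.sum_congr rfl fun i _ => ?_
  rw [Measure.map_apply hm (measurableSet_singleton i), mul_comm]
  exact congrArg (· * g i) (sampleMeasure_setOf_countLE_eq μ t i)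

lemma riskE_invEst_eq_lintegral_sum (μ : Measure ℝ) [SigmaFinite μ] {ρ : ℝ → ℝ≥0∞}
    (hρ : Measurable ρ) {τ : ℝ → ℝ} (hτF : Measurable fun t => τ (cdfOf μ t))
    (u : Fin (n + 1) → ℝ) :
    riskE μ ρ τ (invEst u) = ∫⁻ t, ∑ i : Fin (n + 1),
      n.choose i * μ (Iic t) ^ (i : ℕ) * μ (Ioi t) ^ (n - i) * ρ (τ (u i) - τ (cdfOf μ t)) ∂μ := by
  rw [riskE, lintegral_lintegral_swap]
  · exact lintegral_congr fun t =>
      lintegral_sampleMeasure_comp_countLE μ t fun i => ρ (τ (u i) - τ (cdfOf μ t))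
  · have hd : Measurable fun p : (Fin n → ℝ) × ℝ => τ (u (countLE p.1 p.2)) :=
      (measurable_from_top (f := fun i => τ (u i))).comp measurable_countLE
    exact (hρ.comp (hd.sub (hτF.comp measurable_snd))).aemeasurable

end InvariantEstimator

theorem invariant_risk_decomposition_general
    {n : ℕ}
    (μ : Measure ℝ) [IsProbabilityMeasure μ] (hF : Continuous (cdfOf μ))
    (ρ : ℝ → ℝ≥0∞) (hρ : Measurable ρ)
    (τ : ℝ → ℝ) (hτc : ContinuousOn τ (Set.Icc 0 1))
    (u : Fin (n + 1) → ℝ) :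
    riskE μ ρ τ (invEst u) =
        ∑ i : Fin (n + 1), ∫⁻ t in Set.Ioo (0 : ℝ) 1,
          ρ (τ (u i) - τ t) *
            ENNReal.ofReal ((n.choose i) * t ^ (i : ℕ) * (1 - t) ^ (n - (i : ℕ))) ∧
      riskE μ ρ τ (invEst u) =
        (1 / ((n : ℝ≥0∞) + 1)) * ∑ i : Fin (n + 1), ∫⁻ t in Set.Ioo (0 : ℝ) 1,
          ρ (τ (u i) - τ t) * ENNReal.ofReal (betaDen n i t) := by
  set w : Fin (n + 1) → ℝ → ℝ≥0∞ := fun i s =>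
    ENNReal.ofReal (n.choose i * s ^ (i : ℕ) * (1 - s) ^ (n - (i : ℕ)))
  rw [cdfOf_eq_cdf] at hF
  have hτF : Continuous fun t => τ (cdf μ t) :=
    hτc.comp_continuous hF fun t => ⟨cdf_nonneg μ t, cdf_le_one μ t⟩
  have hterm (i : Fin (n + 1)) :
      AEMeasurable (fun s => w i s * ρ (τ (u i) - τ s)) (volume.restrict (Ioo 0 1)) :=
    (by fun_prop : Measurable (w i)).aemeasurable.mul
      (hρ.comp_aemeasurable (aemeasurable_const.sub
        ((hτc.mono Ioo_subset_Icc_self).aemeasurable measurableSet_Ioo)))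
  have hrisk : riskE μ ρ τ (invEst u) = ∑ i, ∫⁻ t in Ioo 0 1, ρ (τ (u i) - τ t) * w i t := by
    rw [riskE_invEst_eq_lintegral_sum μ hρ (by rw [cdfOf_eq_cdf]; exact hτF.measurable)]
    simp_rw [choose_mul_measure_Iic_pow_mul_measure_Ioi_pow, cdfOf_eq_cdf]
    rw [lintegral_comp_cdf hF (f := fun s => ∑ i, w i s * ρ (τ (u i) - τ s))
      (Finset.aemeasurable_fun_sum _ fun i _ => hterm i),
      lintegral_finsetSum' _ fun i _ => hterm i]
    simp_rw [mul_comm (w _ _)]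
  refine ⟨hrisk, ?_⟩
  have hbeta (i : Fin (n + 1)) (t : ℝ) : ENNReal.ofReal (betaDen n i t) = (n + 1) * w i t := by
    rw [betaDen, mul_assoc, mul_assoc, ← mul_assoc (n.choose i : ℝ),
      ENNReal.ofReal_mul (by positivity), ← Nat.cast_succ, ENNReal.ofReal_natCast, Nat.cast_succ]
  have hN : (n : ℝ≥0∞) + 1 ≠ ⊤ := by finiteness
  calc riskE μ ρ τ (invEst u)
      = 1 / ((n : ℝ≥0∞) + 1) *
          (((n : ℝ≥0∞) + 1) * ∑ i, ∫⁻ t in Ioo 0 1, ρ (τ (u i) - τ t) * w i t) := by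
        rw [hrisk, ← mul_assoc, one_div, ENNReal.inv_mul_cancel (by positivity) hN, one_mul]
    _ = _ := by
        simp_rw [Finset.mul_sum, ← lintegral_const_mul' _ _ hN, hbeta, mul_left_comm]

/-- the risk of an invariant estimator under the integrated loss
`L_{ρ,τ}` equals `Σ_{i=0}^n ∫₀¹ ρ(τ(u_i) − τ(t))·C(n,i)·t^i·(1−t)^{n−i} dt`
and also `(1/(n+1))·Σ_{i=0}^n ∫₀¹ ρ(τ(u_i) − τ(t))·f_{T_i}(t) dt`; in particular
it does not depend on `F`. -/
theorem invariant_risk_decomposition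
    {n : ℕ} (hn : 1 ≤ n)
    (μ : Measure ℝ) [IsProbabilityMeasure μ] (hF : Continuous (cdfOf μ))
    (ρ : ℝ → ℝ≥0∞) (hρ : Measurable ρ)
    (τ : ℝ → ℝ) (hτc : ContinuousOn τ (Set.Icc 0 1))
    (hτm : StrictMonoOn τ (Set.Icc 0 1))
    (u : Fin (n + 1) → ℝ) (hu : Monotone u) (hu0 : 0 ≤ u 0)
    (hu1 : u (Fin.last n) ≤ 1) :
    riskE μ ρ τ (invEst u) =
        ∑ i : Fin (n + 1), ∫⁻ t in Set.Ioo (0 : ℝ) 1,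
          ρ (τ (u i) - τ t) *
            ENNReal.ofReal ((n.choose i) * t ^ (i : ℕ) * (1 - t) ^ (n - (i : ℕ))) ∧
      riskE μ ρ τ (invEst u) =
        (1 / ((n : ℝ≥0∞) + 1)) * ∑ i : Fin (n + 1), ∫⁻ t in Set.Ioo (0 : ℝ) 1,
          ρ (τ (u i) - τ t) * ENNReal.ofReal (betaDen n i t) :=
  invariant_risk_decomposition_general μ hF ρ hρ τ hτc u
end
end

section
/- Let n ≥ 1, let ρ: ℝ → [0,∞) be strict bowl-shaped and differentiable with sup_z |ρ′(z)| < ∞, and let τ: [0,1] → ℝ be continuous and strictly increasing. Define G_0(u) = ∫₀¹ ρ(τ(u) − τ(t))·(n+1)·(1−t)^n dt and G_n(u) = ∫₀¹ ρ(τ(u) − τ(t))·(n+1)·t^n dt for u ∈ [0,1]. Then every minimizer u_0* of G_0 on [0,1] satisfies u_0* > 0, and every minimizer u_n* of G_n on [0,1] satisfies u_n* < 1. -/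
/-!
Write `G_i(v) = F_i(τ v)` with `F_i(c) = ∫₀¹ ρ(c - τ t) f_i(t) dt`. As `ρ'` is bounded, `F_i` is
differentiable with `F_i'(c) = ∫₀¹ ρ'(c - τ t) f_i(t) dt`, and by the intermediate value theorem a
minimiser `v` of `G_i` on `[0,1]` makes `τ v` a minimiser of `F_i` on `[τ 0, τ 1]`. But every
`τ 0 - τ t` with `t > 0` is negative, so `F_i'(τ 0) < 0` and `F_i` decreases to the right of `τ 0`;
symmetrically `F_i'(τ 1) > 0`.
-/

open MeasureTheory Set Filter
open scoped ENNReal NNReal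

noncomputable section

/-- `ρ : ℝ → ℝ` is strict bowl-shaped and differentiable. -/
structure StrictBowlShaped (ρ : ℝ → ℝ) : Prop where
  nonneg : ∀ z, 0 ≤ ρ z
  diff : Differentiable ℝ ρ
  zero : ρ 0 = 0
  deriv_neg : ∀ z < (0 : ℝ), deriv ρ z < 0
  deriv_pos : ∀ z > (0 : ℝ), 0 < deriv ρ z

/-- `G_i(v) = ∫₀¹ ρ(τ(v) − τ(t))·f_{T_i}(t) dt`; note that
`f_{T_0}(t) = (n+1)(1−t)^n` and `f_{T_n}(t) = (n+1)t^n`. -/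
def GFun (n : ℕ) (ρ τ : ℝ → ℝ) (i : Fin (n + 1)) (v : ℝ) : ℝ :=
  ∫ t in Set.Ioo (0 : ℝ) 1, ρ (τ v - τ t) * betaDen n i t

theorem continuous_betaDen (n i : ℕ) : Continuous (betaDen n i) := by
  unfold betaDen
  fun_prop

theorem betaDen_pos {n : ℕ} (i : Fin (n + 1)) {t : ℝ} (ht : t ∈ Ioo 0 1) :
    0 < betaDen n i t := by
  have : 0 < 1 - t := sub_pos.2 ht.2
  have : 0 < t := ht.1
  have : (0 : ℝ) < n.choose i := by exact_mod_cast Nat.choose_pos (Nat.lt_succ_iff.1 i.is_lt)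
  unfold betaDen
  positivity

theorem setIntegral_Ioo_pos {f : ℝ → ℝ} {a b : ℝ} (hab : a < b) (hf : IntegrableOn f (Ioo a b))
    (hpos : ∀ x ∈ Ioo a b, 0 < f x) : 0 < ∫ x in Ioo a b, f x := by
  rw [← integral_Ioc_eq_integral_Ioo, ← intervalIntegral.integral_of_le hab.le]
  refine intervalIntegral.intervalIntegral_pos_of_pos_on ?_ hpos hab
  exact (intervalIntegrable_iff_integrableOn_Ioo_of_le hab.le).2 hf

theorem IsMinOn.of_comp_Icc {f τ : ℝ → ℝ} {a b u : ℝ} (hab : a ≤ b)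
    (hτ : ContinuousOn τ (Icc a b)) (h : IsMinOn (f ∘ τ) (Icc a b) u) :
    IsMinOn f (Icc (τ a) (τ b)) (τ u) := by
  refine isMinOn_iff.2 fun y hy => ?_
  obtain ⟨v, hv, rfl⟩ := intermediate_value_Icc hab hτ hy
  exact h hv

theorem IsMinOn.hasDerivAt_nonneg_of_left {f : ℝ → ℝ} {f' a b : ℝ}
    (h : IsMinOn f (Icc a b) a) (hab : a < b) (hf : HasDerivAt f f' a) : 0 ≤ f' := by
  have hy : b - a ∈ posTangentConeAt (Icc a b) a :=
    sub_mem_posTangentConeAt_of_segment_subset (segment_eq_Icc hab.le).subset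
  have := h.localize.hasFDerivWithinAt_nonneg hf.hasFDerivAt.hasFDerivWithinAt hy
  exact (mul_nonneg_iff_of_pos_left (sub_pos.2 hab)).1 (by simpa using this)

theorem IsMinOn.hasDerivAt_nonpos_of_right {f : ℝ → ℝ} {f' a b : ℝ}
    (h : IsMinOn f (Icc a b) b) (hab : a < b) (hf : HasDerivAt f f' b) : f' ≤ 0 := by
  have hy : a - b ∈ posTangentConeAt (Icc a b) b :=
    sub_mem_posTangentConeAt_of_segment_subset (segment_symm ℝ b a ▸ segment_eq_Icc hab.le).subset
  have := h.localize.hasFDerivWithinAt_nonneg hf.hasFDerivAt.hasFDerivWithinAt hy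
  exact nonpos_of_mul_nonneg_right (by simpa using this) (sub_neg.2 hab)

theorem hasDerivAt_integral_comp_sub_mul {α : Type*} [MeasurableSpace α] {μ : Measure α}
    {ρ : ℝ → ℝ} (hρ : Differentiable ℝ ρ) {K : ℝ} (hK : ∀ z, |deriv ρ z| ≤ K)
    {x w : α → ℝ} (hx : AEMeasurable x μ) (hw : Integrable w μ) {c : ℝ}
    (hc : Integrable (fun t => ρ (c - x t) * w t) μ) :
    Integrable (fun t => deriv ρ (c - x t) * w t) μ ∧
      HasDerivAt (fun c => ∫ t, ρ (c - x t) * w t ∂μ) (∫ t, deriv ρ (c - x t) * w t ∂μ) c :=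
  hasDerivAt_integral_of_dominated_loc_of_deriv_le (F := fun c t => ρ (c - x t) * w t)
    (F' := fun c t => deriv ρ (c - x t) * w t) (bound := fun t => K * |w t|) univ_mem
    (Eventually.of_forall fun _ =>
      (hρ.continuous.measurable.comp_aemeasurable
        (aemeasurable_const.sub hx)).aestronglyMeasurable.mul hw.aestronglyMeasurable)
    hc
    (((measurable_deriv ρ).comp_aemeasurable (aemeasurable_const.sub hx)).aestronglyMeasurable.mul
      hw.aestronglyMeasurable)
    (ae_of_all _ fun t _ _ => by
      rw [norm_mul, Real.norm_eq_abs, Real.norm_eq_abs]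
      exact mul_le_mul_of_nonneg_right (hK _) (abs_nonneg _))
    (hw.abs.const_mul K)
    (ae_of_all _ fun t c' _ => by
      simpa using ((hρ _).hasDerivAt.comp c' ((hasDerivAt_id c').sub_const (x t))).mul_const (w t))

section EndpointNotMin

variable {ρ τ w : ℝ → ℝ} {K a b : ℝ}

theorem hasDerivAt_setIntegral_Ioo_comp_sub_mul (hρ : Differentiable ℝ ρ)
    (hK : ∀ z, |deriv ρ z| ≤ K) (hτ : ContinuousOn τ (Icc a b)) (hw : ContinuousOn w (Icc a b))
    (c : ℝ) :
    IntegrableOn (fun t => deriv ρ (c - τ t) * w t) (Ioo a b) ∧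
      HasDerivAt (fun c => ∫ t in Ioo a b, ρ (c - τ t) * w t)
        (∫ t in Ioo a b, deriv ρ (c - τ t) * w t) c :=
  hasDerivAt_integral_comp_sub_mul hρ hK
    ((hτ.mono Ioo_subset_Icc_self).aemeasurable measurableSet_Ioo)
    (hw.integrableOn_Icc.mono_set Ioo_subset_Icc_self)
    (((hρ.continuous.comp_continuousOn (continuousOn_const.sub hτ)).mul
      hw).integrableOn_Icc.mono_set Ioo_subset_Icc_self)

variable (hρ : Differentiable ℝ ρ) (hK : ∀ z, |deriv ρ z| ≤ K) (hab : a < b)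
  (hτc : ContinuousOn τ (Icc a b)) (hτm : StrictMonoOn τ (Icc a b))
  (hwc : ContinuousOn w (Icc a b)) (hw : ∀ t ∈ Ioo a b, 0 < w t)
include hρ hK hab hτc hτm hwc hw

theorem not_isMinOn_setIntegral_Ioo_comp_sub_mul_left (hρ_neg : ∀ z < 0, deriv ρ z < 0) :
    ¬ IsMinOn (fun v => ∫ t in Ioo a b, ρ (τ v - τ t) * w t) (Icc a b) a := by
  intro hmin
  obtain ⟨hint, hderiv⟩ := hasDerivAt_setIntegral_Ioo_comp_sub_mul hρ hK hτc hwc (τ a)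
  have hFmin : IsMinOn (fun c => ∫ t in Ioo a b, ρ (c - τ t) * w t) (Icc (τ a) (τ b)) (τ a) :=
    hmin.of_comp_Icc hab.le hτc
  have hnonneg := hFmin.hasDerivAt_nonneg_of_left
    (hτm (left_mem_Icc.2 hab.le) (right_mem_Icc.2 hab.le) hab) hderiv
  have hneg_pos : 0 < ∫ t in Ioo a b, -(deriv ρ (τ a - τ t) * w t) :=
    setIntegral_Ioo_pos hab hint.neg fun t ht => by
      have hτt : τ a < τ t := hτm (left_mem_Icc.2 hab.le) (Ioo_subset_Icc_self ht) ht.1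
      exact neg_pos.2 (mul_neg_of_neg_of_pos (hρ_neg _ (sub_neg.2 hτt)) (hw t ht))
  rw [integral_neg] at hneg_pos
  linarith

theorem not_isMinOn_setIntegral_Ioo_comp_sub_mul_right (hρ_pos : ∀ z > 0, 0 < deriv ρ z) :
    ¬ IsMinOn (fun v => ∫ t in Ioo a b, ρ (τ v - τ t) * w t) (Icc a b) b := by
  intro hmin
  obtain ⟨hint, hderiv⟩ := hasDerivAt_setIntegral_Ioo_comp_sub_mul hρ hK hτc hwc (τ b)
  have hFmin : IsMinOn (fun c => ∫ t in Ioo a b, ρ (c - τ t) * w t) (Icc (τ a) (τ b)) (τ b) :=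
    hmin.of_comp_Icc hab.le hτc
  have hnonpos := hFmin.hasDerivAt_nonpos_of_right
    (hτm (left_mem_Icc.2 hab.le) (right_mem_Icc.2 hab.le) hab) hderiv
  have hpos : 0 < ∫ t in Ioo a b, deriv ρ (τ b - τ t) * w t :=
    setIntegral_Ioo_pos hab hint fun t ht => by
      have hτt : τ t < τ b := hτm (Ioo_subset_Icc_self ht) (right_mem_Icc.2 hab.le) ht.2
      exact mul_pos (hρ_pos _ (sub_pos.2 hτt)) (hw t ht)
  linarith

end EndpointNotMin

theorem extreme_weights_interior_general
    {n : ℕ}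
    (ρ : ℝ → ℝ) (hρ : StrictBowlShaped ρ)
    (K : ℝ) (hK : ∀ z, |deriv ρ z| ≤ K)
    (τ : ℝ → ℝ) (hτc : ContinuousOn τ (Set.Icc 0 1))
    (hτm : StrictMonoOn τ (Set.Icc 0 1)) :
    (∀ u₀ ∈ Set.Icc (0 : ℝ) 1,
      (∀ v ∈ Set.Icc (0 : ℝ) 1, GFun n ρ τ 0 u₀ ≤ GFun n ρ τ 0 v) → 0 < u₀) ∧
    (∀ uₙ ∈ Set.Icc (0 : ℝ) 1,
      (∀ v ∈ Set.Icc (0 : ℝ) 1, GFun n ρ τ (Fin.last n) uₙ ≤ GFun n ρ τ (Fin.last n) v) →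
        uₙ < 1) := by
  have hβc (i : Fin (n + 1)) := (continuous_betaDen n i).continuousOn (s := Icc 0 1)
  refine ⟨fun u₀ hu₀ hmin => hu₀.1.lt_of_ne ?_, fun uₙ huₙ hmin => huₙ.2.lt_of_ne ?_⟩
  · rintro rfl
    exact not_isMinOn_setIntegral_Ioo_comp_sub_mul_left hρ.diff hK zero_lt_one hτc hτm (hβc 0)
      (fun _ => betaDen_pos 0) hρ.deriv_neg (isMinOn_iff.2 hmin)
  · rintro rfl
    exact not_isMinOn_setIntegral_Ioo_comp_sub_mul_right hρ.diff hK zero_lt_one hτc hτm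
      (hβc (Fin.last n)) (fun _ => betaDen_pos (Fin.last n)) hρ.deriv_pos (isMinOn_iff.2 hmin)

/-- any minimizer of `G_0` over `[0,1]` is `> 0` and any
minimizer of `G_n` over `[0,1]` is `< 1`. -/
theorem extreme_weights_interior
    {n : ℕ} (hn : 1 ≤ n)
    (ρ : ℝ → ℝ) (hρ : StrictBowlShaped ρ)
    (K : ℝ) (hK : ∀ z, |deriv ρ z| ≤ K)
    (τ : ℝ → ℝ) (hτc : ContinuousOn τ (Set.Icc 0 1))
    (hτm : StrictMonoOn τ (Set.Icc 0 1)) :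
    (∀ u₀ ∈ Set.Icc (0 : ℝ) 1,
      (∀ v ∈ Set.Icc (0 : ℝ) 1, GFun n ρ τ 0 u₀ ≤ GFun n ρ τ 0 v) → 0 < u₀) ∧
    (∀ uₙ ∈ Set.Icc (0 : ℝ) 1,
      (∀ v ∈ Set.Icc (0 : ℝ) 1, GFun n ρ τ (Fin.last n) uₙ ≤ GFun n ρ τ (Fin.last n) v) →
        uₙ < 1) :=
  extreme_weights_interior_general ρ hρ K hK τ hτc hτm

end
end

section
/- Let n ≥ 1 and let α ∈ (0,1) be a constant. Let d₀, d₁: ℝ^n × ℝ → [0,1] be jointly Borel measurable estimators of F, and let d₀*(Y;t) = Σ_{i=0}^n ((i+1)/(n+2))·1{Y_i ≤ t < Y_{i+1}} be the best invariant estimator under integrated squared error L₀(d,F) = ∫_ℝ (d(t) − F(t))² dF(t), with risk R₀(d,F) = E_F[L₀(d(X;·),F)]. Define the balanced risk R_{α,d₀}(d,F) = E_F[∫_ℝ { α·(d − d₀)² + (1−α)·(d − F(t))² } dF(t)]. Then for every continuous cumulative distribution function F, R_{α,d₀}(α·d₀ + (1−α)·d₀*, F) − R_{α,d₀}(α·d₀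 + (1−α)·d₁, F) = (1−α)²·( R₀(d₀*,F) − R₀(d₁,F) ). In particular, if R₀(d₁,F) ≤ R₀(d₀*,F) for all continuous F with strict inequality for some F, then α·d₀ + (1−α)·d₁ dominates α·d₀ + (1−α)·d₀* under the balanced risk R_{α,d₀}. -/
/-!
Since `α d₀ + (1 - α) d - d₀ = (1 - α) (d - d₀)`, the balanced loss of the mixture splits pointwise
as `α (1 - α) (d₀ - F)² + (1 - α)² (d - F)²`. All integrands are bounded, so integrating gives
`R_{α,d₀}(α d₀ + (1 - α) d) = α (1 - α) R₀(d₀) + (1 - α)² R₀(d)` for every probability measure; the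
`R₀(d₀)` term cancels in the difference, and the factor `(1 - α)² > 0` transfers the dominance.
-/

open MeasureTheory Set
open scoped ENNReal NNReal

noncomputable section

/-- Risk under integrated squared error `L₀(d,F) = ∫ (d(t) − F(t))² dF(t)`. -/
def riskSqReal {n : ℕ} (μ : Measure ℝ) (d : (Fin n → ℝ) → ℝ → ℝ) : ℝ :=
  ∫ x, (∫ t, (d x t - cdfOf μ t) ^ 2 ∂μ) ∂(sampleMeasure n μ)

/-- Balanced risk with constant weight `α` and target `d₀`:
`R_{α,d₀}(d,F) = E_F[∫ { α·(d − d₀)² + (1−α)·(d − F(t))² } dF(t)]`. -/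
def riskBalC {n : ℕ} (μ : Measure ℝ) (α : ℝ)
    (d₀ d : (Fin n → ℝ) → ℝ → ℝ) : ℝ :=
  ∫ x, (∫ t,
      (α * (d x t - d₀ x t) ^ 2 + (1 - α) * (d x t - cdfOf μ t) ^ 2) ∂μ)
    ∂(sampleMeasure n μ)

/-- Aggarwal's best invariant estimator of `F` under integrated squared error,
with weights `(i+1)/(n+2)`. -/
def aggEst (n : ℕ) : (Fin n → ℝ) → ℝ → ℝ :=
  invEst (fun i : Fin (n + 1) => ((i : ℝ) + 1) / ((n : ℝ) + 2))

open Function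

lemma cdfOf_mem_Icc (μ : Measure ℝ) [IsProbabilityMeasure μ] (t : ℝ) :
    cdfOf μ t ∈ Icc (0 : ℝ) 1 :=
  ⟨measureReal_nonneg, measureReal_le_one⟩

lemma monotone_cdfOf (μ : Measure ℝ) [IsFiniteMeasure μ] : Monotone (cdfOf μ) :=
  fun _ _ hst => measureReal_mono (Iic_subset_Iic.2 hst)

lemma measurable_uncurry_countLE (n : ℕ) : Measurable (uncurry (countLE (n := n))) := by
  refine measurable_to_countable' fun i => ?_
  have : uncurry (countLE (n := n)) ⁻¹' {i} =
      {p | ∑ j : Fin n, (if p.1 j ≤ p.2 then 1 else 0 : ℕ) = i} := by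
    ext ⟨x, t⟩
    simp only [mem_preimage, mem_singleton_iff, uncurry_apply_pair, countLE, Fin.ext_iff,
      Finset.card_filter, mem_ofPred_eq]
  rw [this]
  refine measurableSet_eq_fun (Finset.measurable_sum _ fun j _ => ?_) measurable_const
  exact Measurable.ite (measurableSet_le ((measurable_pi_apply j).comp measurable_fst)
    measurable_snd) measurable_const measurable_const

lemma measurable_uncurry_invEst {n : ℕ} (u : Fin (n + 1) → ℝ) :
    Measurable (uncurry (invEst u)) :=
  (measurable_of_countable u).comp (measurable_uncurry_countLE n)

lemma aggEst_mem_Icc (n : ℕ) (x : Fin n → ℝ) (t : ℝ) : aggEst n x t ∈ Icc (0 : ℝ) 1 := by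
  have hi : ((countLE x t : ℕ) : ℝ) ≤ n := by exact_mod_cast Nat.lt_succ_iff.mp (countLE x t).isLt
  simp only [aggEst, invEst]
  exact ⟨by positivity, (div_le_one (by positivity)).2 (by linarith)⟩

instance isProbabilityMeasure_sampleMeasure (n : ℕ) (μ : Measure ℝ) [IsProbabilityMeasure μ] :
    IsProbabilityMeasure (sampleMeasure n μ) := by
  unfold sampleMeasure
  infer_instance

lemma integrable_sqErr_prod {X : Type*} [MeasurableSpace X] (ν : Measure X) [IsFiniteMeasure ν]
    (μ : Measure ℝ) [IsProbabilityMeasure μ] {d : X → ℝ → ℝ} (hd : Measurable (uncurry d))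
    (hdr : ∀ x t, d x t ∈ Icc (0 : ℝ) 1) :
    Integrable (fun p : X × ℝ => (d p.1 p.2 - cdfOf μ p.2) ^ 2) (ν.prod μ) := by
  have hF : Measurable (cdfOf μ) := (monotone_cdfOf μ).measurable
  refine .of_bound ((hd.sub (hF.comp measurable_snd)).pow_const 2).aestronglyMeasurable 1
    (ae_of_all _ fun p => ?_)
  obtain ⟨hd0, hd1⟩ := hdr p.1 p.2
  obtain ⟨hF0, hF1⟩ := cdfOf_mem_Icc μ p.2
  rw [Real.norm_of_nonneg (sq_nonneg _)]
  nlinarith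

lemma balanced_sq_loss_mix (α a b c : ℝ) :
    α * (α * a + (1 - α) * b - a) ^ 2 + (1 - α) * (α * a + (1 - α) * b - c) ^ 2 =
      α * (1 - α) * (a - c) ^ 2 + (1 - α) ^ 2 * (b - c) ^ 2 := by
  ring

theorem riskBalC_mix {n : ℕ} (μ : Measure ℝ) [IsProbabilityMeasure μ] (α : ℝ)
    {d₀ d : (Fin n → ℝ) → ℝ → ℝ} (hd₀ : Measurable (uncurry d₀)) (hd : Measurable (uncurry d))
    (hd₀r : ∀ x t, d₀ x t ∈ Icc (0 : ℝ) 1) (hdr : ∀ x t, d x t ∈ Icc (0 : ℝ) 1) :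
    riskBalC μ α d₀ (fun x t => α * d₀ x t + (1 - α) * d x t) =
      α * (1 - α) * riskSqReal μ d₀ + (1 - α) ^ 2 * riskSqReal μ d := by
  have h₀ := integrable_sqErr_prod (sampleMeasure n μ) μ hd₀ hd₀r
  have h := integrable_sqErr_prod (sampleMeasure n μ) μ hd hdr
  unfold riskBalC riskSqReal
  simp_rw [balanced_sq_loss_mix]
  rw [← integral_const_mul, ← integral_const_mul,
    ← integral_add (h₀.integral_prod_left.const_mul _) (h.integral_prod_left.const_mul _)]
  refine integral_congr_ae ?_
  filter_upwards [h₀.prod_right_ae, h.prod_right_ae] with x h₀x hx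
  rw [integral_add (h₀x.const_mul _) (hx.const_mul _), integral_const_mul, integral_const_mul]

theorem balanced_dominance_general
    {n : ℕ}
    (α : ℝ) (hα : α ∈ Set.Ioo (0 : ℝ) 1)
    (d₀ d₁ : (Fin n → ℝ) → ℝ → ℝ)
    (hd₀ : Measurable (Function.uncurry d₀)) (hd₁ : Measurable (Function.uncurry d₁))
    (hd₀r : ∀ x t, d₀ x t ∈ Set.Icc (0 : ℝ) 1)
    (hd₁r : ∀ x t, d₁ x t ∈ Set.Icc (0 : ℝ) 1) :
    (∀ (μ : Measure ℝ), IsProbabilityMeasure μ → Continuous (cdfOf μ) →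
      riskBalC μ α d₀ (fun x t => α * d₀ x t +
          (1 - α) * aggEst n x t) -
        riskBalC μ α d₀ (fun x t => α * d₀ x t + (1 - α) * d₁ x t) =
      (1 - α) ^ 2 *
        (riskSqReal μ (aggEst n) -
          riskSqReal μ d₁)) ∧
    ((∀ (μ : Measure ℝ), IsProbabilityMeasure μ → Continuous (cdfOf μ) →
        riskSqReal μ d₁ ≤
          riskSqReal μ (aggEst n)) →
      (∃ (μ : Measure ℝ), IsProbabilityMeasure μ ∧ Continuous (cdfOf μ) ∧
        riskSqReal μ d₁ <
          riskSqReal μ (aggEst n)) →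
      (∀ (μ : Measure ℝ), IsProbabilityMeasure μ → Continuous (cdfOf μ) →
        riskBalC μ α d₀ (fun x t => α * d₀ x t + (1 - α) * d₁ x t) ≤
          riskBalC μ α d₀ (fun x t => α * d₀ x t +
            (1 - α) * aggEst n x t)) ∧
      (∃ (μ : Measure ℝ), IsProbabilityMeasure μ ∧ Continuous (cdfOf μ) ∧
        riskBalC μ α d₀ (fun x t => α * d₀ x t + (1 - α) * d₁ x t) <
          riskBalC μ α d₀ (fun x t => α * d₀ x t +
            (1 - α) * aggEst n x t))) := by
  have key : ∀ (μ : Measure ℝ), IsProbabilityMeasure μ → Continuous (cdfOf μ) →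
      riskBalC μ α d₀ (fun x t => α * d₀ x t + (1 - α) * aggEst n x t) -
        riskBalC μ α d₀ (fun x t => α * d₀ x t + (1 - α) * d₁ x t) =
      (1 - α) ^ 2 * (riskSqReal μ (aggEst n) - riskSqReal μ d₁) := fun μ _ _ => by
    rw [riskBalC_mix (d := aggEst n) μ α hd₀ (measurable_uncurry_invEst _) hd₀r (aggEst_mem_Icc n),
      riskBalC_mix μ α hd₀ hd₁ hd₀r hd₁r]
    ring
  have hweight : 0 < (1 - α) ^ 2 := pow_pos (sub_pos.2 hα.2) 2
  refine ⟨key, fun hle ⟨μ₀, hμ₀, hF₀, hlt⟩ => ⟨fun μ hμ hF => ?_, μ₀, hμ₀, hF₀, ?_⟩⟩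
  · rw [← sub_nonneg, key μ hμ hF]
    exact mul_nonneg hweight.le (sub_nonneg.2 (hle μ hμ hF))
  · rw [← sub_pos, key μ₀ hμ₀ hF₀]
    exact mul_pos hweight (sub_pos.2 hlt)

/-- with constant weight `α ∈ (0,1)`, target `d₀`, and
`d₀*` the best invariant estimator under integrated squared error
(weights `(i+1)/(n+2)`), the balanced risk difference identity
`R_{α,d₀}(αd₀+(1−α)d₀*) − R_{α,d₀}(αd₀+(1−α)d₁) = (1−α)²(R₀(d₀*) − R₀(d₁))`
holds; in particular if `d₁` dominates `d₀*` under `R₀`, then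
`αd₀+(1−α)d₁` dominates `αd₀+(1−α)d₀*` under `R_{α,d₀}`. -/
theorem balanced_dominance
    {n : ℕ} (hn : 1 ≤ n)
    (α : ℝ) (hα : α ∈ Set.Ioo (0 : ℝ) 1)
    (d₀ d₁ : (Fin n → ℝ) → ℝ → ℝ)
    (hd₀ : Measurable (Function.uncurry d₀)) (hd₁ : Measurable (Function.uncurry d₁))
    (hd₀r : ∀ x t, d₀ x t ∈ Set.Icc (0 : ℝ) 1)
    (hd₁r : ∀ x t, d₁ x t ∈ Set.Icc (0 : ℝ) 1) :
    (∀ (μ : Measure ℝ), IsProbabilityMeasure μ → Continuous (cdfOf μ) →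
      riskBalC μ α d₀ (fun x t => α * d₀ x t +
          (1 - α) * aggEst n x t) -
        riskBalC μ α d₀ (fun x t => α * d₀ x t + (1 - α) * d₁ x t) =
      (1 - α) ^ 2 *
        (riskSqReal μ (aggEst n) -
          riskSqReal μ d₁)) ∧
    ((∀ (μ : Measure ℝ), IsProbabilityMeasure μ → Continuous (cdfOf μ) →
        riskSqReal μ d₁ ≤
          riskSqReal μ (aggEst n)) →
      (∃ (μ : Measure ℝ), IsProbabilityMeasure μ ∧ Continuous (cdfOf μ) ∧
        riskSqReal μ d₁ <
          riskSqReal μ (aggEst n)) →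
      (∀ (μ : Measure ℝ), IsProbabilityMeasure μ → Continuous (cdfOf μ) →
        riskBalC μ α d₀ (fun x t => α * d₀ x t + (1 - α) * d₁ x t) ≤
          riskBalC μ α d₀ (fun x t => α * d₀ x t +
            (1 - α) * aggEst n x t)) ∧
      (∃ (μ : Measure ℝ), IsProbabilityMeasure μ ∧ Continuous (cdfOf μ) ∧
        riskBalC μ α d₀ (fun x t => α * d₀ x t + (1 - α) * d₁ x t) <
          riskBalC μ α d₀ (fun x t => α * d₀ x t +
            (1 - α) * aggEst n x t))) :=
  balanced_dominance_general α hα d₀ d₁ hd₀ hd₁ hd₀r hd₁r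
end
end
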